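/- Hard Lefschetz surjectivity (pointwise linear-algebra form underlying Lemma 3.4, surjective part): for all natural numbers p, k with 2p + 2k ≥ 2n (equivalently p + k ≥ n), the Lefschetz map L_ω^k : ⋀^p V → ⋀^{p+2k} V, α ↦ ω^k ∧ α, is surjective; i.e., every β ∈ ⋀^{p+2k} V can be written as β = ω^k ∧ α for some α ∈ ⋀^p V. -/

import Mathlib

/-!
Let `L = ω ∧ ·` and let `Λ = Σᵢ ι_{fᵢ*} ι_{eᵢ*}` be the contraction with the dual of `ω`.
Since `Σ_s b_s ∧ ι_{b_s*}` acts as `m` on `⋀^m` (Euler), `[Λ, L] = n - m` there, and iterating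
gives `L Λ^{i+1} = Λ^{i+1} L + (i+1)(m-n-i) Λ^i` on `⋀^m`. So if `x ∈ ⋀^m` with `L x = 0`, then
`L^{m-n} Λ^{m-n} x` is a nonzero multiple of `x` when `m ≥ n`, and `x` lies in the image of
`L^{m-n}`. A general `x ∈ ⋀^{p+2k}` reduces to this case by downward induction on the degree:
if `L x = L^{k+1} u`, then `L` kills `x - L^k u`.
-/

open ExteriorAlgebra CliffordAlgebra

namespace ExteriorAlgebra

section Grading

variable {R M : Type*} [CommRing R] [AddCommGroup M] [Module R M]

theorem ι_mem_exteriorPower_one (v : M) : ι R v ∈ ⋀[R]^1 M := by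
  simpa only [pow_one] using LinearMap.mem_range_self _ v

theorem contractLeft_eq_zero_of_mem_exteriorPower_zero (d : Module.Dual R M)
    {x : ExteriorAlgebra R M} (hx : x ∈ ⋀[R]^0 M) : contractLeft d x = 0 := by
  rw [exteriorPower, pow_zero, Submodule.mem_one] at hx
  obtain ⟨r, rfl⟩ := hx
  exact contractLeft_algebraMap (Q := 0) d r

theorem contractLeft_mem_exteriorPower (d : Module.Dual R M) {m : ℕ} {x : ExteriorAlgebra R M}
    (hx : x ∈ ⋀[R]^m M) : contractLeft d x ∈ ⋀[R]^(m - 1) M := by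
  induction hx using Submodule.pow_induction_on_left' with
  | algebraMap r =>
    rw [contractLeft_algebraMap (Q := 0)]
    exact zero_mem _
  | add x y i _ _ hx hy => exact map_add (contractLeft d) x y ▸ add_mem hx hy
  | mem_mul _ hv i y hy ih =>
    obtain ⟨v, rfl⟩ := hv
    rw [contractLeft_ι_mul, Nat.succ_sub_one]
    refine sub_mem (Submodule.smul_mem _ _ hy) ?_
    cases i with
    | zero => simp [contractLeft_eq_zero_of_mem_exteriorPower_zero d hy]
    | succ j => simpa [add_comm] using SetLike.mul_mem_graded (ι_mem_exteriorPower_one v) ih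

theorem sum_ι_mul_contractLeft_coord {κ : Type*} [Fintype κ] (b : Module.Basis κ R M) {m : ℕ}
    {x : ExteriorAlgebra R M} (hx : x ∈ ⋀[R]^m M) :
    ∑ s, ι R (b s) * contractLeft (b.coord s) x = (m : R) • x := by
  induction hx using Submodule.pow_induction_on_left' with
  | algebraMap r => simp [contractLeft_algebraMap (Q := 0)]
  | add x y i _ _ hx hy => simp only [map_add, mul_add, Finset.sum_add_distrib, hx, hy, smul_add]
  | mem_mul _ hv i y hy ih =>
    obtain ⟨v, rfl⟩ := hv
    have hv : ∑ s, b.coord s v • ι R (b s) = ι R v := by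
      simp_rw [← map_smul, ← map_sum, Module.Basis.coord_apply, b.sum_repr]
    calc ∑ s, ι R (b s) * contractLeft (b.coord s) (ι R v * y)
        = ∑ s, (b.coord s v • ι R (b s) * y +
            ι R v * (ι R (b s) * contractLeft (b.coord s) y)) := by
          refine Finset.sum_congr rfl fun s _ => ?_
          rw [contractLeft_ι_mul, mul_sub, mul_smul_comm,
            ι_mul_ι_mul_of_isOrtho _ (QuadraticMap.IsOrtho.all _ _), sub_neg_eq_add,
            smul_mul_assoc]
      _ = ι R v * y + ι R v * ((i : R) • y) := by
          rw [Finset.sum_add_distrib, ← Finset.sum_mul, ← Finset.mul_sum, hv, ih]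
      _ = ((i + 1 : ℕ) : R) • (ι R v * y) := by
          rw [mul_smul_comm, Nat.cast_succ, add_smul, one_smul, add_comm]

theorem eq_zero_of_mem_exteriorPower_of_finrank_lt [Nontrivial R] [Module.Free R M]
    [Module.Finite R M] {m : ℕ} (hm : Module.finrank R M < m) {x : ExteriorAlgebra R M}
    (hx : x ∈ ⋀[R]^m M) : x = 0 := by
  have : Subsingleton (⋀[R]^m M) := by
    rw [← Module.finrank_eq_zero_iff_of_free R, exteriorPower.finrank_eq R m,
      Nat.choose_eq_zero_of_lt hm]
  simpa using Subsingleton.elim (⟨x, hx⟩ : ⋀[R]^m M) 0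

theorem eq_zero_of_mem_exteriorPower_of_two_mul_card_lt [Nontrivial R] {I : Type*} [Fintype I]
    (b : Module.Basis (I ⊕ I) R M) {m : ℕ} (hm : 2 * Fintype.card I < m)
    {x : ExteriorAlgebra R M} (hx : x ∈ ⋀[R]^m M) : x = 0 := by
  have := Module.Free.of_basis b
  have := Module.Finite.of_basis b
  refine eq_zero_of_mem_exteriorPower_of_finrank_lt ?_ hx
  rwa [Module.finrank_eq_card_basis b, Fintype.card_sum, ← two_mul]

theorem contractLeft_ι_mul_ι (d : Module.Dual R M) (u v : M) :
    contractLeft d (ι R u * ι R v) = d u • ι R v - d v • ι R u := by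
  rw [contractLeft_ι_mul, contractLeft_ι (Q := 0), ← Algebra.commutes, ← Algebra.smul_def]

theorem contractLeft_ι_mul_ι_mul (d : Module.Dual R M) (u v : M) (y : ExteriorAlgebra R M) :
    contractLeft d (ι R u * ι R v * y) =
      contractLeft d (ι R u * ι R v) * y + ι R u * ι R v * contractLeft d y := by
  rw [contractLeft_ι_mul_ι, mul_assoc, contractLeft_ι_mul, contractLeft_ι_mul]
  simp only [mul_sub, mul_smul_comm, sub_mul, smul_mul_assoc, mul_assoc]
  abel

end Grading

section Symplectic

variable {R M : Type*} [CommRing R] [AddCommGroup M] [Module R M]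
variable {I : Type*} [Fintype I] (b : Module.Basis (I ⊕ I) R M)

noncomputable def symplecticForm : ExteriorAlgebra R M :=
  ∑ i, ι R (b (.inl i)) * ι R (b (.inr i))

noncomputable def dualLefschetz : Module.End R (ExteriorAlgebra R M) :=
  ∑ i, contractLeft (b.coord (.inr i)) ∘ₗ contractLeft (b.coord (.inl i))

local notation "ω" => symplecticForm b
local notation "Λ" => dualLefschetz b

theorem dualLefschetz_apply (x : ExteriorAlgebra R M) :
    Λ x = ∑ i, contractLeft (b.coord (.inr i)) (contractLeft (b.coord (.inl i)) x) := by
  simp [dualLefschetz]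

theorem symplecticForm_mem_exteriorPower_two : ω ∈ ⋀[R]^2 M :=
  Submodule.sum_mem _ fun _ _ =>
    SetLike.mul_mem_graded (ι_mem_exteriorPower_one _) (ι_mem_exteriorPower_one _)

theorem symplecticForm_pow_mem_exteriorPower (i : ℕ) : ω ^ i ∈ ⋀[R]^(2 * i) M := by
  simpa [mul_comm] using SetLike.pow_mem_graded i (symplecticForm_mem_exteriorPower_two b)

theorem dualLefschetz_mem_exteriorPower {m : ℕ} {x : ExteriorAlgebra R M} (hx : x ∈ ⋀[R]^m M) :
    Λ x ∈ ⋀[R]^(m - 2) M := by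
  rw [dualLefschetz_apply]
  exact Submodule.sum_mem _ fun i _ => by
    simpa [Nat.sub_sub] using contractLeft_mem_exteriorPower _ (contractLeft_mem_exteriorPower _ hx)

theorem dualLefschetz_pow_mem_exteriorPower (i : ℕ) {m : ℕ} {x : ExteriorAlgebra R M}
    (hx : x ∈ ⋀[R]^m M) : (Λ ^ i) x ∈ ⋀[R]^(m - 2 * i) M := by
  induction i generalizing m x with
  | zero => simpa using hx
  | succ i ih =>
    rw [pow_succ, Module.End.mul_apply]
    simpa [Nat.sub_sub, mul_add, add_comm] using ih (dualLefschetz_mem_exteriorPower b hx)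

theorem dualLefschetz_eq_zero_of_lt_two {m : ℕ} (hm : m < 2) {x : ExteriorAlgebra R M}
    (hx : x ∈ ⋀[R]^m M) : Λ x = 0 := by
  rw [dualLefschetz_apply]
  refine Finset.sum_eq_zero fun i _ => contractLeft_eq_zero_of_mem_exteriorPower_zero _ ?_
  simpa [Nat.sub_eq_zero_of_le (Nat.le_of_lt_succ hm)] using contractLeft_mem_exteriorPower _ hx

theorem contractLeft_symplecticForm_mul (d : Module.Dual R M) (y : ExteriorAlgebra R M) :
    contractLeft d (ω * y) = contractLeft d ω * y + ω * contractLeft d y := by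
  simp only [symplecticForm, Finset.sum_mul, map_sum, contractLeft_ι_mul_ι_mul,
    Finset.sum_add_distrib]

theorem contractLeft_coord_inl_symplecticForm (j : I) :
    contractLeft (b.coord (.inl j)) ω = ι R (b (.inr j)) := by
  classical
  simp [symplecticForm, contractLeft_ι_mul_ι, Finsupp.single_apply]

theorem contractLeft_coord_inr_symplecticForm (j : I) :
    contractLeft (b.coord (.inr j)) ω = -ι R (b (.inl j)) := by
  classical
  simp [symplecticForm, contractLeft_ι_mul_ι, Finsupp.single_apply]

theorem dualLefschetz_symplecticForm_mul {m : ℕ} {x : ExteriorAlgebra R M} (hx : x ∈ ⋀[R]^m M) :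
    Λ (ω * x) = ω * Λ x + ((Fintype.card I : R) - m) • x := by
  have hj (j : I) : contractLeft (b.coord (.inr j)) (contractLeft (b.coord (.inl j)) (ω * x)) =
      x - (ι R (b (.inl j)) * contractLeft (b.coord (.inl j)) x +
        ι R (b (.inr j)) * contractLeft (b.coord (.inr j)) x) +
      ω * contractLeft (b.coord (.inr j)) (contractLeft (b.coord (.inl j)) x) := by
    rw [contractLeft_symplecticForm_mul, contractLeft_coord_inl_symplecticForm, map_add,
      contractLeft_ι_mul, contractLeft_symplecticForm_mul, contractLeft_coord_inr_symplecticForm]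
    simp only [Module.Basis.coord_apply, Module.Basis.repr_self, Finsupp.single_eq_same, one_smul,
      neg_mul]
    abel
  rw [dualLefschetz_apply, dualLefschetz_apply, Finset.sum_congr rfl fun j _ => hj j,
    Finset.sum_add_distrib, Finset.sum_sub_distrib, ← Finset.mul_sum, Finset.sum_add_distrib,
    ← Fintype.sum_sum_type (f := fun s => ι R (b s) * contractLeft (b.coord s) x),
    sum_ι_mul_contractLeft_coord b hx, Finset.sum_const, Finset.card_univ, sub_smul]
  simp only [Nat.cast_smul_eq_nsmul]
  abel

theorem symplecticForm_mul_dualLefschetz_pow_succ (i : ℕ) {m : ℕ} {x : ExteriorAlgebra R M}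
    (hx : x ∈ ⋀[R]^m M) :
    ω * (Λ ^ (i + 1)) x = (Λ ^ (i + 1)) (ω * x) +
      ((i + 1 : R) * ((m : R) - Fintype.card I - i)) • (Λ ^ i) x := by
  induction i generalizing m x with
  | zero =>
    rw [zero_add, pow_one, dualLefschetz_symplecticForm_mul b hx]
    simp only [Nat.cast_zero, zero_add, one_mul, sub_zero, pow_zero, Module.End.one_apply]
    module
  | succ i ih =>
    have hΛx : ω * (Λ ^ (i + 1)) (Λ x) = (Λ ^ (i + 1)) (ω * Λ x) +
        ((i + 1 : R) * ((m : R) - 2 - Fintype.card I - i)) • (Λ ^ i) (Λ x) := by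
      rcases lt_or_ge m 2 with hm | hm
      · simp [dualLefschetz_eq_zero_of_lt_two b hm hx]
      · simpa [Nat.cast_sub hm] using ih (dualLefschetz_mem_exteriorPower b hx)
    have hωx : ω * Λ x = Λ (ω * x) + ((m : R) - Fintype.card I) • x := by
      rw [dualLefschetz_symplecticForm_mul b hx]
      module
    simp only [pow_succ _ (i + 1), pow_succ _ i, Module.End.mul_apply] at hΛx ⊢
    rw [hΛx, hωx]
    simp only [map_add, map_smul]
    push_cast
    module

theorem symplecticForm_pow_mul_dualLefschetz_pow {m : ℕ} {x : ExteriorAlgebra R M}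
    (hx : x ∈ ⋀[R]^m M) (hωx : ω * x = 0) (i : ℕ) :
    ω ^ i * (Λ ^ i) x =
      (∏ j ∈ Finset.range i, ((j + 1 : R) * ((m : R) - Fintype.card I - j))) • x := by
  induction i with
  | zero => simp
  | succ i ih =>
    rw [pow_succ, mul_assoc, symplecticForm_mul_dualLefschetz_pow_succ b i hx, hωx, map_zero,
      zero_add, mul_smul_comm, ih, smul_smul, Finset.prod_range_succ, mul_comm]

end Symplectic

section HardLefschetz

variable {K M : Type*} [Field K] [CharZero K] [AddCommGroup M] [Module K M]
variable {I : Type*} [Fintype I] (b : Module.Basis (I ⊕ I) K M)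

local notation "ω" => symplecticForm b
local notation "Λ" => dualLefschetz b

theorem exists_eq_symplecticForm_pow_mul_of_mul_eq_zero {p k : ℕ}
    (hpk : Fintype.card I ≤ p + k) {x : ExteriorAlgebra K M} (hx : x ∈ ⋀[K]^(p + 2 * k) M)
    (hωx : ω * x = 0) : ∃ α ∈ ⋀[K]^p M, x = ω ^ k * α := by
  by_cases htop : 2 * Fintype.card I < p + 2 * k
  · exact ⟨0, zero_mem _, by rw [eq_zero_of_mem_exteriorPower_of_two_mul_card_lt b htop hx,
      mul_zero]⟩
  set i := p + 2 * k - Fintype.card I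
  set c := ∏ j ∈ Finset.range i, ((j + 1 : K) * (((p + 2 * k : ℕ) : K) - Fintype.card I - j))
  have hc : c ≠ 0 := Finset.prod_ne_zero_iff.mpr fun j hj => by
    have : p + 2 * k ≠ Fintype.card I + j := by grind
    refine mul_ne_zero (Nat.cast_add_one_ne_zero j) ?_
    rw [sub_sub, sub_ne_zero]
    exact_mod_cast this
  refine ⟨c⁻¹ • (ω ^ (i - k) * (Λ ^ i) x), Submodule.smul_mem _ _ ?_, ?_⟩
  · convert SetLike.mul_mem_graded (symplecticForm_pow_mem_exteriorPower b (i - k))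
      (dualLefschetz_pow_mem_exteriorPower b i hx) using 2
    omega
  · rw [mul_smul_comm, ← mul_assoc, ← pow_add, Nat.add_sub_cancel' (by omega),
      symplecticForm_pow_mul_dualLefschetz_pow b hx hωx, smul_smul, inv_mul_cancel₀ hc, one_smul]

theorem exists_eq_symplecticForm_pow_mul {p k : ℕ} (hpk : Fintype.card I ≤ p + k)
    {x : ExteriorAlgebra K M} (hx : x ∈ ⋀[K]^(p + 2 * k) M) :
    ∃ α ∈ ⋀[K]^p M, x = ω ^ k * α := by
  by_cases htop : 2 * Fintype.card I < p + 2 * k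
  · exact ⟨0, zero_mem _, by rw [eq_zero_of_mem_exteriorPower_of_two_mul_card_lt b htop hx,
      mul_zero]⟩
  have hωx : ω * x ∈ ⋀[K]^(p + 2 * (k + 1)) M := by
    convert SetLike.mul_mem_graded (symplecticForm_mem_exteriorPower_two b) hx using 2
    ring
  obtain ⟨u, hu, hωx_eq⟩ := exists_eq_symplecticForm_pow_mul (k := k + 1) (by omega) hωx
  have hmem : x - ω ^ k * u ∈ ⋀[K]^(p + 2 * k) M := by
    refine sub_mem hx ?_
    convert SetLike.mul_mem_graded (symplecticForm_pow_mem_exteriorPower b k) hu using 2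
    ring
  have hprim : ω * (x - ω ^ k * u) = 0 := by
    rw [mul_sub, hωx_eq, ← mul_assoc, ← pow_succ', sub_self]
  obtain ⟨α, hα, hx_eq⟩ := exists_eq_symplecticForm_pow_mul_of_mul_eq_zero b hpk hmem hprim
  exact ⟨α + u, add_mem hα hu, by rw [mul_add, ← hx_eq, sub_add_cancel]⟩
termination_by 2 * Fintype.card I + 1 - (p + 2 * k)

end HardLefschetz

end ExteriorAlgebra

theorem hard_lefschetz_surjective_general
    {V : Type*} [AddCommGroup V] [Module ℝ V] (n : ℕ)
    (b : Module.Basis (Fin n ⊕ Fin n) ℝ V)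
    (e f : Fin n → V) (he : ∀ i, e i = b (Sum.inl i)) (hf : ∀ i, f i = b (Sum.inr i))
    (ω : ExteriorAlgebra ℝ V) (hω : ω = ∑ i : Fin n, ι ℝ (e i) * ι ℝ (f i))
    (p k : ℕ) (hpk : n ≤ p + k) :
    ∀ β ∈ ⋀[ℝ]^(p + 2 * k) V, ∃ α ∈ ⋀[ℝ]^p V, β = ω ^ k * α := by
  obtain rfl : ω = symplecticForm b := by simp only [hω, he, hf, symplecticForm]
  exact fun β hβ => exists_eq_symplecticForm_pow_mul b (by rwa [Fintype.card_fin]) hβ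

/-- Hard Lefschetz surjectivity (pointwise linear-algebra form): for `p + k ≥ n`, the
Lefschetz map `L_ω^k : ⋀^p V → ⋀^{p+2k} V`, `α ↦ ω^k ∧ α`, is surjective: every
`β ∈ ⋀^{p+2k} V` can be written as `β = ω^k ∧ α` for some `α ∈ ⋀^p V`. -/
theorem hard_lefschetz_surjective
    {V : Type*} [AddCommGroup V] [Module ℝ V] (n : ℕ) (hn : 0 < n)
    (b : Module.Basis (Fin n ⊕ Fin n) ℝ V)
    (e f : Fin n → V) (he : ∀ i, e i = b (Sum.inl i)) (hf : ∀ i, f i = b (Sum.inr i))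
    (ω : ExteriorAlgebra ℝ V) (hω : ω = ∑ i : Fin n, ι ℝ (e i) * ι ℝ (f i))
    (p k : ℕ) (hpk : n ≤ p + k) :
    ∀ β ∈ ⋀[ℝ]^(p + 2 * k) V, ∃ α ∈ ⋀[ℝ]^p V, β = ω ^ k * α :=
  hard_lefschetz_surjective_general n b e f he hf ω hω p k hpk
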